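/- Let g(x) = Σ_{i=0}^{m} c_i x^i ∈ F[x] and 0 < δ < 1. Then for every integer r with q^r < δ and every index k ∈ {0,…,m} with |c_k| ≥ δ · max_{0 ≤ i ≤ m} |c_i|, one has sup_{x ∈ B(0,q^r)} |g(x)| ≥ |c_k| q^{rk} / k^k (with the convention 0^0 = 1), where B(0,q^r) denotes the ball of radius q^r about 0 in F. -/

import Mathlib

/-!
Common setup for Khintchine–Groshev type theorems over the function field
`F = 𝔽_q((X⁻¹))`, following Das–Ganguly,
"Inhomogeneous Khintchine-Groshev type theorems on manifolds over function fields".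
-/

open Filter MeasureTheory
open scoped Topology ENNReal Classical

noncomputable section

namespace KGFF

variable (Fq : Type) [Field Fq] [Fintype Fq]

/-- The local field `F = 𝔽_q((X⁻¹))`, realized as the field of formal Laurent
series in the variable `T = X⁻¹`. -/
abbrev F : Type := LaurentSeries Fq

/-- `q`, the cardinality of the coefficient field. -/
def qq : ℕ := Fintype.card Fq

variable {Fq}

/-- The absolute value `|a| = q ^ (deg a)`.  In the variable `T = X⁻¹`,
the degree of `a` (the largest power of `X` occurring) is `-(a.order)`. -/
def absv (a : F Fq) : ℝ :=
  if a = 0 then 0 else (qq Fq : ℝ) ^ (-(a.order))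

/-- The element `X` of `F` (the inverse of the Laurent-series variable `T`). -/
def Xvar : F Fq := HahnSeries.single (-1 : ℤ) 1

/-- The embedding of `Λ = 𝔽_q[X]` into `F`, sending `X` to `Xvar`. -/
def emb (p : Polynomial Fq) : F Fq := Polynomial.aeval (Xvar : F Fq) p

/-- The absolute value of a polynomial, viewed inside `F`. -/
def pabs (p : Polynomial Fq) : ℝ := absv (emb p)

/-- The supremum norm on `F^k`. -/
def snorm {k : ℕ} (x : Fin k → F Fq) : ℝ := ⨆ i, absv (x i)

/-- The supremum norm of a vector of polynomials. -/
def pnorm {k : ℕ} (a : Fin k → Polynomial Fq) : ℝ := ⨆ i, pabs (a i)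

/-- Open ball in `F^d` for the supremum norm. -/
def Ball {d : ℕ} (x₀ : Fin d → F Fq) (r : ℝ) : Set (Fin d → F Fq) :=
  {x | snorm (x - x₀) < r}

/-- Closed ball in `F^d` for the supremum norm. -/
def CBall {d : ℕ} (x₀ : Fin d → F Fq) (r : ℝ) : Set (Fin d → F Fq) :=
  {x | snorm (x - x₀) ≤ r}

/-- `F` carries the Borel σ-algebra of its valuation topology. -/
instance : MeasurableSpace (F Fq) := borel _

/-- A Haar measure on `F^d`: a translation invariant measure, normalized so that
the closed unit ball has measure `1`. -/
def IsHaar {d : ℕ} (μ : Measure (Fin d → F Fq)) : Prop :=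
  (∀ (v : Fin d → F Fq) (s : Set (Fin d → F Fq)), μ ((fun x => v + x) ⁻¹' s) = μ s) ∧
    μ {x : Fin d → F Fq | snorm x ≤ 1} = 1

/-- Partial derivative in the `j`-th coordinate, as a limit of difference quotients. -/
def pderiv {d : ℕ} (j : Fin d) (g : (Fin d → F Fq) → F Fq) (x : Fin d → F Fq) : F Fq :=
  limUnder (𝓝[≠] (0 : F Fq)) fun t => (g (Function.update x j (x j + t)) - g x) / t

/-- The supremum norm of the gradient. -/
def gradNorm {d : ℕ} (g : (Fin d → F Fq) → F Fq) (x : Fin d → F Fq) : ℝ :=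
  snorm fun j => pderiv j g x

/-- The supremum norm of the skew gradient `∇̃(g₁,g₂) = g₁∇g₂ - g₂∇g₁`. -/
def skewGradNorm {d : ℕ} (g₁ g₂ : (Fin d → F Fq) → F Fq) (x : Fin d → F Fq) : ℝ :=
  snorm fun j => g₁ x * pderiv j g₂ x - g₂ x * pderiv j g₁ x

/-- `g` is analytic on `S`: around every point of `S` it is the sum of a convergent
power series. -/
def IsAnalyticOn {d : ℕ} (S : Set (Fin d → F Fq)) (g : (Fin d → F Fq) → F Fq) : Prop :=
  ∀ x₀ ∈ S, ∃ r : ℝ, 0 < r ∧ ∃ c : (Fin d →₀ ℕ) → F Fq,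
    ∀ x : Fin d → F Fq, snorm (x - x₀) < r →
      HasSum (fun m : Fin d →₀ ℕ => c m * ∏ i : Fin d, (x i - x₀ i) ^ m i) (g x)

/-- `g` is analytic on `U` and extends analytically to the boundary of `U`. -/
def AnalyticWithBoundary {d : ℕ} (U : Set (Fin d → F Fq)) (g : (Fin d → F Fq) → F Fq) : Prop :=
  ∃ g' : (Fin d → F Fq) → F Fq, IsAnalyticOn (closure U) g' ∧ Set.EqOn g' g U

/-- All second-order difference quotients of `g` are bounded by `1` in absolute value
on `U` (condition (IV)/(VI) of Das–Ganguly). -/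
def SecondDiffQuotBound {d : ℕ} (U : Set (Fin d → F Fq)) (g : (Fin d → F Fq) → F Fq) : Prop :=
  (∀ i j : Fin d, i ≠ j → ∀ x : Fin d → F Fq, ∀ s₁ s₂ t₁ t₂ : F Fq,
      s₁ ≠ s₂ → t₁ ≠ t₂ →
      (∀ s ∈ ({s₁, s₂} : Set (F Fq)), ∀ t ∈ ({t₁, t₂} : Set (F Fq)),
        Function.update (Function.update x i s) j t ∈ U) →
      absv ((((g (Function.update (Function.update x i s₁) j t₁)
                - g (Function.update (Function.update x i s₂) j t₁))
              - (g (Function.update (Function.update x i s₁) j t₂)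
                - g (Function.update (Function.update x i s₂) j t₂)))
            / ((s₁ - s₂) * (t₁ - t₂)))) ≤ 1) ∧
  (∀ i : Fin d, ∀ x : Fin d → F Fq, ∀ s₁ s₂ s₃ : F Fq,
      s₁ ≠ s₂ → s₁ ≠ s₃ → s₂ ≠ s₃ →
      (∀ s ∈ ({s₁, s₂, s₃} : Set (F Fq)), Function.update x i s ∈ U) →
      absv (((g (Function.update x i s₁) - g (Function.update x i s₃)) / (s₁ - s₃)
            - (g (Function.update x i s₂) - g (Function.update x i s₃)) / (s₂ - s₃))
            / (s₁ - s₂)) ≤ 1)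

/-- The restrictions of `1, f 0, …, f (n-1)` to any open subset of `U` are linearly
independent over `F` (condition (III)). -/
def IndepOnOpens {d n : ℕ} (U : Set (Fin d → F Fq))
    (f : Fin n → (Fin d → F Fq) → F Fq) : Prop :=
  ∀ V : Set (Fin d → F Fq), IsOpen V → V.Nonempty → V ⊆ U →
    ∀ (c₀ : F Fq) (c : Fin n → F Fq),
      (∀ x ∈ V, c₀ + ∑ i, c i * f i x = 0) → c₀ = 0 ∧ ∀ i, c i = 0

/-- Conditions (II), (III) and (IV) of Das–Ganguly on the map `f : U → F^n`. -/
structure Nondeg {d n : ℕ} (U : Set (Fin d → F Fq))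
    (f : Fin n → (Fin d → F Fq) → F Fq) : Prop where
  analytic : ∀ i, AnalyticWithBoundary U (f i)
  first_coord : ∀ (hn : 0 < n) (hd : 0 < d), ∀ x ∈ U, f ⟨0, hn⟩ x = x ⟨0, hd⟩
  indep : IndepOnOpens U f
  bound : ∀ x ∈ U, ∀ i, absv (f i x) ≤ 1
  grad_bound : ∀ x ∈ U, ∀ i, gradNorm (f i) x ≤ 1
  second_bound : ∀ i, SecondDiffQuotBound U (f i)

/-- Condition (VI) of Das–Ganguly on the inhomogeneous part `θ : U → F`. -/
structure ThetaCond {d : ℕ} (U : Set (Fin d → F Fq))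
    (θ : (Fin d → F Fq) → F Fq) : Prop where
  analytic : AnalyticWithBoundary U θ
  bound : ∀ x ∈ U, absv (θ x) ≤ 1
  grad_bound : ∀ x ∈ U, gradNorm θ x ≤ 1
  second_bound : SecondDiffQuotBound U θ

/-- `U` is an open box in `F^d` with respect to the sup norm. -/
def IsOpenBox {d : ℕ} (U : Set (Fin d → F Fq)) : Prop :=
  ∃ (x₀ : Fin d → F Fq) (r : Fin d → ℝ), (∀ i, 0 < r i) ∧
    U = {x | ∀ i, absv (x i - x₀ i) < r i}

/-- A multivariable approximating function `Ψ : Λⁿ → ℝ₊`. -/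
def IsApproxFun {n : ℕ} (Ψ : (Fin n → Polynomial Fq) → ℝ) : Prop :=
  (∀ a, 0 < Ψ a) ∧
    ∀ a b : Fin n → Polynomial Fq, (∀ i, pabs (a i) ≤ pabs (b i)) → Ψ b ≤ Ψ a

/-- The set `W_f(Ψ,θ)` of points `x ∈ U` at which `f x` is `(Ψ,θ)`-approximable:
there are infinitely many `(a, a₀) ∈ (Λⁿ \ {0}) × Λ` with
`|f(x)·a + a₀ + θ(x)| < Ψ(a)`. -/
def Wset {d n : ℕ} (U : Set (Fin d → F Fq)) (f : Fin n → (Fin d → F Fq) → F Fq)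
    (Ψ : (Fin n → Polynomial Fq) → ℝ) (θ : (Fin d → F Fq) → F Fq) :
    Set (Fin d → F Fq) :=
  {x ∈ U | {p : (Fin n → Polynomial Fq) × Polynomial Fq |
      p.1 ≠ 0 ∧
        absv ((∑ i, emb (p.1 i) * f i x) + emb p.2 + θ x) < Ψ p.1}.Infinite}

/-- `g` is `(C,α)`-good on `V` with respect to the measure `μ`:
for every ball `B ⊆ V` and every `ε > 0`,
`μ {x ∈ B : g x < ε} ≤ C (ε / ‖g‖_B)^α μ B`. -/
def IsCAGoodOn {d : ℕ} (μ : Measure (Fin d → F Fq)) (C α : ℝ)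
    (V : Set (Fin d → F Fq)) (g : (Fin d → F Fq) → ℝ) : Prop :=
  ∀ (x₀ : Fin d → F Fq) (r : ℝ), 0 < r → Ball x₀ r ⊆ V →
    ∀ ε : ℝ, 0 < ε →
      μ {x ∈ Ball x₀ r | g x < ε} ≤
        ENNReal.ofReal C *
          (ENNReal.ofReal ε / ENNReal.ofReal (sSup (g '' Ball x₀ r))) ^ α *
          μ (Ball x₀ r)

/-- The sup norm of the wedge `a ∧ a'` of two vectors of `Fⁿ`. -/
def wedgeNorm {n : ℕ} (a a' : Fin n → F Fq) : ℝ :=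
  ⨆ p : Fin n × Fin n, absv (a p.1 * a' p.2 - a p.2 * a' p.1)

/-- `a, a'` are orthonormal: `‖a‖ = ‖a'‖ = ‖a ∧ a'‖ = 1`. -/
def Orthonormal2 {n : ℕ} (a a' : Fin n → F Fq) : Prop :=
  snorm a = 1 ∧ snorm a' = 1 ∧ wedgeNorm a a' = 1

/-- Diameter (in `ℝ≥0∞`) of a subset of `F^d` with respect to the sup norm. -/
def ediam {d : ℕ} (S : Set (Fin d → F Fq)) : ℝ≥0∞ :=
  ⨆ x ∈ S, ⨆ y ∈ S, ENNReal.ofReal (snorm (x - y))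

/-- The `s`-dimensional Hausdorff measure (as an outer measure) on `F^d` with respect
to the sup norm. -/
def hausdorffMeas {d : ℕ} (s : ℝ) (A : Set (Fin d → F Fq)) : ℝ≥0∞ :=
  ⨆ (δ : ℝ≥0∞) (_ : 0 < δ),
    ⨅ (t : ℕ → Set (Fin d → F Fq)) (_ : A ⊆ ⋃ k, t k) (_ : ∀ k, ediam (t k) ≤ δ),
      ∑' k, ⨆ (_ : (t k).Nonempty), ediam (t k) ^ s

/-- `max(0, t₁, …, tₙ)`; for integers `tᵢ ≥ 1` this is `maxᵢ tᵢ`. -/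
def zmax {n : ℕ} (tv : Fin n → ℤ) : ℤ := Finset.univ.fold max 0 tv

/-- The set `Φ^f(t,δ)` of `x ∈ U` for which there are `a ∈ Λⁿ \ {0}`, `a₀ ∈ Λ` with
`‖a‖ = q^t` and `|f(x)·a + a₀| < δ q^{-nt}`. -/
def PhiSet {d n : ℕ} (U : Set (Fin d → F Fq)) (f : Fin n → (Fin d → F Fq) → F Fq)
    (t : ℕ) (δ : ℝ) : Set (Fin d → F Fq) :=
  {x ∈ U | ∃ (a : Fin n → Polynomial Fq) (a₀ : Polynomial Fq), a ≠ 0 ∧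
      pnorm a = (qq Fq : ℝ) ^ t ∧
      absv ((∑ i, emb (a i) * f i x) + emb a₀) < δ * ((qq Fq : ℝ) ^ (n * t))⁻¹}

/-- `f` is nice at `x₀ ∈ U` (with respect to the Haar measure `μ`). -/
def NiceAt {d n : ℕ} (μ : Measure (Fin d → F Fq)) (U : Set (Fin d → F Fq))
    (f : Fin n → (Fin d → F Fq) → F Fq) (x₀ : Fin d → F Fq) : Prop :=
  ∃ U₀ : Set (Fin d → F Fq), IsOpen U₀ ∧ x₀ ∈ U₀ ∧ U₀ ⊆ U ∧
    ∃ δ w : ℝ, 0 < δ ∧ δ < 1 ∧ 0 < w ∧ w < 1 ∧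
      ∃ r₀ : ℝ, 0 < r₀ ∧ ∀ (y : Fin d → F Fq) (r : ℝ), 0 < r → r ≤ r₀ → Ball y r ⊆ U₀ →
        Filter.limsup (fun t : ℕ => μ (PhiSet U f t δ ∩ Ball y r)) Filter.atTop ≤
          ENNReal.ofReal w * μ (Ball y r)

/-- `f` is nice: it is nice at almost every point of `U`. -/
def Nice {d n : ℕ} (μ : Measure (Fin d → F Fq)) (U : Set (Fin d → F Fq))
    (f : Fin n → (Fin d → F Fq) → F Fq) : Prop :=
  μ {x ∈ U | ¬ NiceAt μ U f x} = 0

end KGFF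

/-!
Choose `k + 1` points `v_a` in the ball `|x| ≤ q^r` with mutual distances at least `q^r / k`:
`X^r` times the polynomials in `X⁻¹` of degree at most `log_q k`, which are numerous enough
because the residue field has `q` elements. Let `W` be their nodal polynomial. The interpolant
`g %ₘ W` has `k`-th coefficient `∑_a g(v_a) / ∏_{b ≠ a} (v_a - v_b)`, of absolute value at most
`sup |g| · (k / q^r)^k`. On the other hand `|W_s| ≤ q^{r(k+1-s)}`, so the quotient `g /ₘ W` has
coefficients `|Q_j| ≤ C q^{-rj}` with `C = maxᵢ |cᵢ|`, whence `|c_k - (g %ₘ W)_k| ≤ C q^r < |c_k|`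
and, by the ultrametric inequality, `|(g %ₘ W)_k| ≥ |c_k|`.
-/

open Polynomial Finset

section AbsoluteValue

variable {K : Type*} [Field K]

lemma abv_coeff_le_iSup_of_natDegree_le (abv : AbsoluteValue K ℝ) {g : K[X]} {m : ℕ}
    (hdeg : g.natDegree ≤ m) (i : ℕ) :
    abv (g.coeff i) ≤ ⨆ j : Fin (m + 1), abv (g.coeff j) := by
  rcases le_or_gt i m with hi | hi
  · exact Finite.le_ciSup (fun j : Fin (m + 1) => abv (g.coeff j)) ⟨i, by omega⟩
  · rw [coeff_eq_zero_of_natDegree_lt (hdeg.trans_lt hi), map_zero]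
    exact Finite.le_ciSup_of_le 0 (abv.nonneg _)

variable {abv : AbsoluteValue K ℝ}

lemma IsNonarchimedean.apply_multiset_sum_le (hv : IsNonarchimedean abv) {s : Multiset K}
    {C : ℝ} (hC : 0 ≤ C) (h : ∀ x ∈ s, abv x ≤ C) : abv s.sum ≤ C := by
  induction s using Multiset.induction_on with
  | empty => simpa
  | cons a s ih =>
    rw [Multiset.sum_cons]
    exact (hv a s.sum).trans <| max_le (h a (Multiset.mem_cons_self a s))
      (ih fun x hx => h x (Multiset.mem_cons_of_mem hx))

lemma IsNonarchimedean.apply_sum_le_of_forall_le (hv : IsNonarchimedean abv) {ι : Type*}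
    {s : Finset ι} {f : ι → K} {C : ℝ} (hC : 0 ≤ C) (h : ∀ i ∈ s, abv (f i) ≤ C) :
    abv (∑ i ∈ s, f i) ≤ C :=
  hv.apply_multiset_sum_le hC (by simpa using h)

lemma IsNonarchimedean.abv_esymm_le (hv : IsNonarchimedean abv) {s : Multiset K} {ρ : ℝ}
    (hρ : 0 ≤ ρ) (hs : ∀ x ∈ s, abv x ≤ ρ) (n : ℕ) : abv (s.esymm n) ≤ ρ ^ n := by
  refine hv.apply_multiset_sum_le (pow_nonneg hρ n) ?_
  simp only [Multiset.mem_map, Multiset.mem_powersetCard]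
  rintro _ ⟨t, ⟨hts, rfl⟩, rfl⟩
  rw [map_multiset_prod]
  exact Multiset.prod_map_le_pow_card (fun x _ => abv.nonneg x)
    fun x hx => hs x (Multiset.mem_of_le hts hx)

lemma IsNonarchimedean.abv_coeff_nodal_le (hv : IsNonarchimedean abv) {ι : Type*}
    (s : Finset ι) {v : ι → K} {ρ : ℝ} (hρ : 0 ≤ ρ) (hs : ∀ i ∈ s, abv (v i) ≤ ρ) {j : ℕ}
    (hj : j ≤ #s) : abv ((Lagrange.nodal s v).coeff j) ≤ ρ ^ (#s - j) := by
  have := Multiset.prod_X_sub_C_coeff (s.val.map v) (k := j) (by simpa using hj)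
  simp only [Multiset.map_map, Function.comp_def, Multiset.card_map] at this
  rw [Lagrange.nodal_eq, Finset.prod_eq_multiset_prod, this, map_mul,
    map_pow, map_neg_eq_map, map_one, one_pow, one_mul]
  exact hv.abv_esymm_le hρ (by simpa using hs) _

lemma IsNonarchimedean.apply_sub_le (hv : IsNonarchimedean abv) (a b : K) :
    abv (a - b) ≤ max (abv a) (abv b) := by
  simpa only [sub_eq_add_neg, map_neg_eq_map] using hv a (-b)

lemma IsNonarchimedean.abv_eval_le (hv : IsNonarchimedean abv) {g : K[X]} {C : ℝ}
    (hg : ∀ i, abv (g.coeff i) ≤ C) {x : K} (hx : abv x ≤ 1) : abv (g.eval x) ≤ C := by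
  rw [eval_eq_sum_range]
  refine hv.apply_sum_le_of_forall_le ((abv.nonneg _).trans (hg 0)) fun i _ => ?_
  rw [map_mul, map_pow]
  exact (mul_le_of_le_one_right (abv.nonneg _) (pow_le_one₀ (abv.nonneg x) hx)).trans (hg i)

lemma coeff_divByMonic_add_sum_erase {R : Type*} [CommRing R] [Nontrivial R] {W : R[X]}
    (hW : W.Monic) (g : R[X]) (j : ℕ) :
    (g /ₘ W).coeff j + ∑ p ∈ (antidiagonal (j + W.natDegree)).erase (W.natDegree, j),
      W.coeff p.1 * (g /ₘ W).coeff p.2 = g.coeff (j + W.natDegree) := by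
  have hmod : (g %ₘ W).coeff (j + W.natDegree) = 0 := by
    refine coeff_eq_zero_of_degree_lt ((degree_modByMonic_lt g hW).trans_le ?_)
    rw [degree_eq_natDegree hW.ne_zero]
    exact_mod_cast Nat.le_add_left _ _
  conv_rhs => rw [← modByMonic_add_div g W]
  rw [coeff_add, hmod, zero_add, coeff_mul,
    ← Finset.add_sum_erase _ _ (HasAntidiagonal.mem_antidiagonal.mpr (add_comm W.natDegree j) :
      (W.natDegree, j) ∈ antidiagonal (j + W.natDegree)),
    hW.coeff_natDegree, one_mul]

variable {g W : K[X]} {ρ C : ℝ}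

lemma IsNonarchimedean.abv_coeff_divByMonic_le (hv : IsNonarchimedean abv) (hW : W.Monic)
    (hρ0 : 0 < ρ) (hρ1 : ρ ≤ 1)
    (hWcoeff : ∀ s ≤ W.natDegree, abv (W.coeff s) ≤ ρ ^ (W.natDegree - s))
    (hg : ∀ i, abv (g.coeff i) ≤ C) (j : ℕ) : abv ((g /ₘ W).coeff j) ≤ C / ρ ^ j := by
  have hC : 0 ≤ C := (abv.nonneg _).trans (hg 0)
  induction hN : g.natDegree + 1 - j using Nat.strong_induction_on generalizing j with
  | _ N ih =>
  rcases lt_or_ge g.natDegree j with hj | hj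
  · rw [coeff_eq_zero_of_natDegree_lt (by rw [natDegree_divByMonic g hW]; omega), map_zero]
    positivity
  rw [eq_sub_of_add_eq (coeff_divByMonic_add_sum_erase hW g j)]
  refine (hv.apply_sub_le _ _).trans (max_le ((hg _).trans ?_) ?_)
  · exact le_div_self hC (pow_pos hρ0 j) (pow_le_one₀ hρ0.le hρ1)
  refine hv.apply_sum_le_of_forall_le (by positivity) fun ⟨s, u⟩ hsu => ?_
  obtain ⟨hne, hsum⟩ := Finset.mem_erase.mp hsu
  rw [HasAntidiagonal.mem_antidiagonal] at hsum
  rcases lt_or_ge W.natDegree s with hs | hs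
  · rw [coeff_eq_zero_of_natDegree_lt hs, zero_mul, map_zero]
    positivity
  have hju : j < u := by
    by_contra! h
    exact hne (Prod.ext (by dsimp at hsum ⊢; omega) (by dsimp at hsum ⊢; omega))
  have hQ := ih _ (by omega) u rfl
  have hexp : W.natDegree - s = u - j := by omega
  rw [map_mul]
  calc abv (W.coeff s) * abv ((g /ₘ W).coeff u) ≤ ρ ^ (u - j) * (C / ρ ^ u) :=
        mul_le_mul (hexp ▸ hWcoeff s hs) hQ (abv.nonneg _) (pow_nonneg hρ0.le _)
    _ = C / ρ ^ j := by
        rw [show u = u - j + j by omega, pow_add, Nat.add_sub_cancel]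
        field_simp

lemma IsNonarchimedean.abv_coeff_sub_coeff_modByMonic_le (hv : IsNonarchimedean abv)
    (hW : W.Monic) (hρ0 : 0 < ρ) (hρ1 : ρ ≤ 1)
    (hWcoeff : ∀ s ≤ W.natDegree, abv (W.coeff s) ≤ ρ ^ (W.natDegree - s))
    (hg : ∀ i, abv (g.coeff i) ≤ C) {k : ℕ} (hk : k < W.natDegree) :
    abv (g.coeff k - (g %ₘ W).coeff k) ≤ C * ρ := by
  have hC : 0 ≤ C := (abv.nonneg _).trans (hg 0)
  rw [← coeff_sub, ← eq_sub_of_add_eq' (modByMonic_add_div g W), coeff_mul]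
  refine hv.apply_sum_le_of_forall_le (by positivity) fun ⟨s, u⟩ hsu => ?_
  rw [HasAntidiagonal.mem_antidiagonal] at hsu
  have hexp : W.natDegree - s = (W.natDegree - k) + u := by omega
  rw [map_mul]
  calc abv (W.coeff s) * abv ((g /ₘ W).coeff u)
      ≤ ρ ^ ((W.natDegree - k) + u) * (C / ρ ^ u) :=
        mul_le_mul (hexp ▸ hWcoeff s (by omega))
          (hv.abv_coeff_divByMonic_le hW hρ0 hρ1 hWcoeff hg u) (abv.nonneg _) (pow_nonneg hρ0.le _)
    _ = C * ρ ^ (W.natDegree - k) := by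
        rw [pow_add]
        field_simp
    _ ≤ C * ρ := mul_le_mul_of_nonneg_left (pow_le_of_le_one hρ0.le hρ1 (by omega)) hC

lemma IsNonarchimedean.abv_coeff_mul_pow_le_of_nodes (hv : IsNonarchimedean abv) {k : ℕ}
    {P : K[X]} (hP : P.natDegree ≤ k) {v : Fin (k + 1) → K} {η S : ℝ} (hη : 0 < η)
    (hsep : ∀ a b, a ≠ b → η ≤ abv (v a - v b)) (hS : ∀ a, abv (P.eval (v a)) ≤ S) :
    abv (P.coeff k) * η ^ k ≤ S := by
  have hinj : Set.InjOn v (univ : Finset (Fin (k + 1))) := fun a _ b _ hab => by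
    by_contra hne
    have := hsep a b hne
    rw [hab, sub_self, map_zero] at this
    linarith
  have hdeg : P.degree < #(univ : Finset (Fin (k + 1))) := by
    rw [card_univ, Fintype.card_fin]
    exact degree_le_natDegree.trans_lt (by exact_mod_cast Nat.lt_succ_of_le hP)
  have hcoeff := Lagrange.coeff_eq_sum hinj hdeg
  rw [card_univ, Fintype.card_fin, add_tsub_cancel_right] at hcoeff
  rw [hcoeff, ← le_div_iff₀ (pow_pos hη k)]
  refine hv.apply_sum_le_of_forall_le
    (div_nonneg ((abv.nonneg _).trans (hS 0)) (pow_pos hη k).le) fun a _ => ?_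
  have hprod : η ^ k ≤ ∏ b ∈ univ.erase a, abv (v a - v b) := by
    calc η ^ k = ∏ _b ∈ univ.erase a, η := by
          rw [prod_const, card_erase_of_mem (mem_univ a), card_univ, Fintype.card_fin,
            add_tsub_cancel_right]
      _ ≤ _ := prod_le_prod (fun _ _ => hη.le) fun b hb => hsep a b (ne_of_mem_erase hb).symm
  rw [map_div₀, map_prod]
  exact div_le_div₀ ((abv.nonneg _).trans (hS a)) (hS a) (pow_pos hη k) hprod

lemma IsNonarchimedean.abv_coeff_mul_pow_le_of_separated (hv : IsNonarchimedean abv)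
    (hg : ∀ i, abv (g.coeff i) ≤ C) (hρ0 : 0 < ρ) (hρ1 : ρ ≤ 1) {k : ℕ}
    (hk : C * ρ < abv (g.coeff k)) {v : Fin (k + 1) → K} (hvρ : ∀ a, abv (v a) ≤ ρ)
    {η S : ℝ} (hη : 0 < η) (hsep : ∀ a b, a ≠ b → η ≤ abv (v a - v b))
    (hS : ∀ a, abv (g.eval (v a)) ≤ S) :
    abv (g.coeff k) * η ^ k ≤ S := by
  set W := Lagrange.nodal univ v
  have hW : W.Monic := Lagrange.nodal_monic
  have hWdeg : W.natDegree = #(univ : Finset (Fin (k + 1))) := Lagrange.natDegree_nodal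
  have hWcoeff : ∀ s ≤ W.natDegree, abv (W.coeff s) ≤ ρ ^ (W.natDegree - s) := fun s hs => by
    rw [hWdeg] at hs ⊢
    exact hv.abv_coeff_nodal_le univ hρ0.le (fun a _ => hvρ a) hs
  rw [card_univ, Fintype.card_fin] at hWdeg
  have hclose : abv (g.coeff k - (g %ₘ W).coeff k) ≤ C * ρ :=
    hv.abv_coeff_sub_coeff_modByMonic_le hW hρ0 hρ1 hWcoeff hg (by omega)
  have hmod : abv (g.coeff k) ≤ abv ((g %ₘ W).coeff k) := by
    have := hv (g.coeff k - (g %ₘ W).coeff k) ((g %ₘ W).coeff k)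
    rw [sub_add_cancel] at this
    exact (le_max_iff.mp this).resolve_left fun h => (h.trans hclose).not_gt hk
  have hWne : W ≠ 1 := fun h => by simp [h] at hWdeg
  refine (mul_le_mul_of_nonneg_right hmod (pow_nonneg hη.le k)).trans
    (hv.abv_coeff_mul_pow_le_of_nodes ?_ hη hsep fun a => ?_)
  · have := natDegree_modByMonic_lt g hW hWne
    omega
  · rw [modByMonic_eq_sub_mul_div, eval_sub, eval_mul, Lagrange.eval_nodal_at_node (mem_univ a),
      zero_mul, sub_zero]
    exact hS a

end AbsoluteValue

namespace KGFF

variable {Fq : Type} [Field Fq]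

def digitSeries (r : ℤ) {t : ℕ} (d : Fin (t + 1) → Fq) : F Fq :=
  ∑ s : Fin (t + 1), HahnSeries.single (((s : ℕ) : ℤ) - r) (d s)

lemma digitSeries_sub (r : ℤ) {t : ℕ} (d d' : Fin (t + 1) → Fq) :
    digitSeries r (d - d') = digitSeries r d - digitSeries r d' := by
  simp only [digitSeries, Pi.sub_apply, HahnSeries.single_sub, Finset.sum_sub_distrib]

lemma coeff_digitSeries_of_lt (r : ℤ) {t : ℕ} (d : Fin (t + 1) → Fq) {z : ℤ} (hz : z < -r) :
    (digitSeries r d).coeff z = 0 := by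
  rw [digitSeries, HahnSeries.coeff_sum]
  exact Finset.sum_eq_zero fun s _ => HahnSeries.coeff_single_of_ne (by omega)

lemma coeff_digitSeries_natCast_sub (r : ℤ) {t : ℕ} (d : Fin (t + 1) → Fq) (s : Fin (t + 1)) :
    (digitSeries r d).coeff ((s : ℕ) - r) = d s := by
  rw [digitSeries, HahnSeries.coeff_sum, Finset.sum_eq_single s, HahnSeries.coeff_single_same]
  · exact fun s' _ hs' => HahnSeries.coeff_single_of_ne fun h => hs' (Fin.ext (by omega))
  · simp

variable [Fintype Fq]

lemma one_lt_qq : (1 : ℝ) < qq Fq := by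
  exact_mod_cast Fintype.one_lt_card

lemma absv_zero : absv (0 : F Fq) = 0 := if_pos rfl

lemma absv_of_ne_zero {a : F Fq} (h : a ≠ 0) : absv a = (qq Fq : ℝ) ^ (-a.order) := if_neg h

lemma absv_nonneg (a : F Fq) : 0 ≤ absv a := by
  rcases eq_or_ne a 0 with rfl | ha
  · rw [absv_zero]
  · rw [absv_of_ne_zero ha]
    exact zpow_nonneg (zero_le_one.trans one_lt_qq.le) _

lemma absv_mul (a b : F Fq) : absv (a * b) = absv a * absv b := by
  rcases eq_or_ne a 0 with rfl | ha
  · simp [absv_zero]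
  rcases eq_or_ne b 0 with rfl | hb
  · simp [absv_zero]
  rw [absv_of_ne_zero (mul_ne_zero ha hb), absv_of_ne_zero ha, absv_of_ne_zero hb,
    HahnSeries.order_mul ha hb, neg_add, zpow_add₀ (zero_lt_one.trans one_lt_qq).ne']

lemma absv_add_le (a b : F Fq) : absv (a + b) ≤ max (absv a) (absv b) := by
  rcases eq_or_ne (a + b) 0 with hab | hab
  · rw [hab, absv_zero]
    exact (absv_nonneg a).trans (le_max_left _ _)
  rcases eq_or_ne a 0 with rfl | ha
  · simp
  rcases eq_or_ne b 0 with rfl | hb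
  · simp
  rw [absv_of_ne_zero hab, absv_of_ne_zero ha, absv_of_ne_zero hb]
  have hmin := HahnSeries.min_order_le_order_add hab
  rcases min_choice a.order b.order with h | h
  · exact (zpow_le_zpow_right₀ one_lt_qq.le (by omega)).trans (le_max_left _ _)
  · exact (zpow_le_zpow_right₀ one_lt_qq.le (by omega)).trans (le_max_right _ _)

def absvAbv : AbsoluteValue (F Fq) ℝ where
  toFun := absv
  map_mul' := absv_mul
  nonneg' := absv_nonneg
  eq_zero' a := by
    refine ⟨fun h => ?_, fun h => h ▸ absv_zero⟩
    by_contra ha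
    rw [absv_of_ne_zero ha] at h
    exact (zpow_pos (zero_lt_one.trans one_lt_qq) _).ne' h
  add_le' a b := (absv_add_le a b).trans (max_le_add_of_nonneg (absv_nonneg a) (absv_nonneg b))

lemma isNonarchimedean_absvAbv : IsNonarchimedean (absvAbv : AbsoluteValue (F Fq) ℝ) :=
  absv_add_le

lemma absv_le_zpow_of_coeff_eq_zero {x : F Fq} {n : ℤ} (h : ∀ z < n, x.coeff z = 0) :
    absv x ≤ (qq Fq : ℝ) ^ (-n) := by
  rcases eq_or_ne x 0 with rfl | hx
  · rw [absv_zero]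
    exact zpow_nonneg (zero_le_one.trans one_lt_qq.le) _
  rw [absv_of_ne_zero hx]
  refine zpow_le_zpow_right₀ one_lt_qq.le (neg_le_neg (not_lt.mp fun hlt => ?_))
  exact hx (HahnSeries.coeff_order_eq_zero.mp (h _ hlt))

lemma zpow_le_absv_of_coeff_ne_zero {x : F Fq} {n : ℤ} (h : x.coeff n ≠ 0) :
    (qq Fq : ℝ) ^ (-n) ≤ absv x := by
  have hx : x ≠ 0 := by
    rintro rfl
    exact h rfl
  rw [absv_of_ne_zero hx]
  exact zpow_le_zpow_right₀ one_lt_qq.le (neg_le_neg (HahnSeries.order_le_of_coeff_ne_zero h))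

lemma absv_digitSeries_le (r : ℤ) {t : ℕ} (d : Fin (t + 1) → Fq) :
    absv (digitSeries r d) ≤ (qq Fq : ℝ) ^ r := by
  simpa using absv_le_zpow_of_coeff_eq_zero fun z hz => coeff_digitSeries_of_lt r d hz

lemma zpow_le_absv_digitSeries (r : ℤ) {t : ℕ} {d : Fin (t + 1) → Fq} (hd : d ≠ 0) :
    (qq Fq : ℝ) ^ (r - t) ≤ absv (digitSeries r d) := by
  obtain ⟨s, hs⟩ := Function.ne_iff.mp hd
  calc (qq Fq : ℝ) ^ (r - t) ≤ (qq Fq : ℝ) ^ (-((s : ℕ) - r : ℤ)) :=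
        zpow_le_zpow_right₀ one_lt_qq.le (by have := s.is_le; omega)
    _ ≤ absv (digitSeries r d) :=
        zpow_le_absv_of_coeff_ne_zero (coeff_digitSeries_natCast_sub r d s ▸ hs)

lemma exists_separated_nodes (k : ℕ) (r : ℤ) :
    ∃ v : Fin (k + 1) → F Fq, (∀ a, absv (v a) ≤ (qq Fq : ℝ) ^ r) ∧
      ∀ a b, a ≠ b → (qq Fq : ℝ) ^ r / max (k : ℝ) 1 ≤ absv (v a - v b) := by
  have hq : 1 < qq Fq := Fintype.one_lt_card
  set t := Nat.log (qq Fq) (max k 1)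
  have hqt : qq Fq ^ t ≤ max k 1 := Nat.pow_log_le_self _ (by omega)
  have hcard : k + 1 ≤ qq Fq ^ (t + 1) := Nat.lt_pow_succ_log_self hq _ |>.trans_le' (by omega)
  obtain ⟨ι⟩ : Nonempty (Fin (k + 1) ↪ (Fin (t + 1) → Fq)) := by
    apply Function.Embedding.nonempty_of_card_le
    simpa [Fintype.card_fun, qq] using hcard
  refine ⟨fun a => digitSeries r (ι a), fun a => absv_digitSeries_le r _, fun a b hab => ?_⟩
  rw [← digitSeries_sub]
  refine le_trans ?_ (zpow_le_absv_digitSeries r (sub_ne_zero.mpr (ι.injective.ne hab)))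
  rw [zpow_sub₀ (zero_lt_one.trans one_lt_qq).ne', zpow_natCast]
  gcongr
  exact_mod_cast hqt

lemma max_natCast_one_pow_self (k : ℕ) : max (k : ℝ) 1 ^ k = (k : ℝ) ^ k := by
  rcases Nat.eq_zero_or_pos k with rfl | hk
  · simp
  · rw [max_eq_left (by exact_mod_cast hk)]

theorem coeff_sup_bound_general
    (Fq : Type) [Field Fq] [Fintype Fq]
    (m : ℕ) (g : Polynomial (F Fq)) (hdeg : g.natDegree ≤ m)
    (δ : ℝ) (hδ1 : δ < 1)
    (r : ℤ) (hr : (qq Fq : ℝ) ^ r < δ)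
    (k : ℕ)
    (hck : δ * (⨆ i : Fin (m + 1), absv (g.coeff i)) ≤ absv (g.coeff k)) :
    absv (g.coeff k) * (qq Fq : ℝ) ^ (r * k) / (k : ℝ) ^ k ≤
      sSup ((fun x => absv (Polynomial.eval x g)) ''
        {x : F Fq | absv x ≤ (qq Fq : ℝ) ^ r}) := by
  set ρ := (qq Fq : ℝ) ^ r
  set C := ⨆ i : Fin (m + 1), absv (g.coeff i)
  have hρ0 : 0 < ρ := zpow_pos (zero_lt_one.trans one_lt_qq) r
  have hρ1 : ρ ≤ 1 := (hr.trans hδ1).le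
  have hC : ∀ i, absvAbv (g.coeff i) ≤ C := abv_coeff_le_iSup_of_natDegree_le absvAbv hdeg
  have hbdd : BddAbove ((fun x => absv (g.eval x)) '' {x | absv x ≤ ρ}) := by
    refine ⟨C, ?_⟩
    rintro _ ⟨x, hx, rfl⟩
    exact isNonarchimedean_absvAbv.abv_eval_le hC (hx.trans hρ1)
  rcases eq_or_ne (g.coeff k) 0 with h0 | h0
  · rw [h0, absv_zero, zero_mul, zero_div]
    exact le_csSup_of_le hbdd ⟨0, by simpa [absv_zero] using hρ0.le, rfl⟩ (absv_nonneg _)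
  have hCρ : C * ρ < absv (g.coeff k) := by
    have hCpos : 0 < C := (absvAbv.pos h0).trans_le (hC k)
    calc C * ρ < C * δ := mul_lt_mul_of_pos_left hr hCpos
      _ = δ * C := mul_comm C δ
      _ ≤ absv (g.coeff k) := hck
  obtain ⟨v, hvρ, hsep⟩ := exists_separated_nodes (Fq := Fq) k r
  have := isNonarchimedean_absvAbv.abv_coeff_mul_pow_le_of_separated hC hρ0 hρ1 hCρ hvρ
    (by positivity) hsep fun a => le_csSup hbdd ⟨v a, hvρ a, rfl⟩
  rwa [div_pow, max_natCast_one_pow_self, ← zpow_natCast, ← zpow_mul, ← mul_div_assoc] at this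

/-- **Claim (one-variable coefficient bound).** If `g(x) = ∑_{i≤m} cᵢ xⁱ`,
`0 < δ < 1`, `q^r < δ`, and `|c_k| ≥ δ maxᵢ |cᵢ|`, then
`sup_{x ∈ B(0,q^r)} |g(x)| ≥ |c_k| q^{rk} / k^k` (with `0^0 = 1`). -/
theorem coeff_sup_bound
    (Fq : Type) [Field Fq] [Fintype Fq]
    (m : ℕ) (g : Polynomial (F Fq)) (hdeg : g.natDegree ≤ m)
    (δ : ℝ) (hδ0 : 0 < δ) (hδ1 : δ < 1)
    (r : ℤ) (hr : (qq Fq : ℝ) ^ r < δ)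
    (k : ℕ) (hk : k ≤ m)
    (hck : δ * (⨆ i : Fin (m + 1), absv (g.coeff i)) ≤ absv (g.coeff k)) :
    absv (g.coeff k) * (qq Fq : ℝ) ^ (r * k) / (k : ℝ) ^ k ≤
      sSup ((fun x => absv (Polynomial.eval x g)) ''
        {x : F Fq | absv x ≤ (qq Fq : ℝ) ^ r}) :=
  coeff_sup_bound_general Fq m g hdeg δ hδ1 r hr k hck

end KGFF
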